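/- Let κ be an uncountable cardinal, and for every measurable cardinal α < κ let U_α be a normal ultrafilter on α such that {β < α : β is measurable} ∉ U_α; for X ⊆ κ write S_X = {α < κ : α is measurable and X ∩ α ∈ U_α}. Let V₀ and V₁ be normal ultrafilters on κ, each containing M = {α < κ : α is measurable}, and suppose X ⊆ κ satisfies S_X ∈ V₀ and S_X ∉ V₁. Define W_ℓ (ℓ = 0, 1) by Y ∈ W_ℓ iff S_Y ∈ V_ℓ. Then W₀ and W₁ are normal ultrafilters on κ, M ∉ W₀ and M ∉ W₁, and X ∈ W₀ but X ∉ W₁; in particular W₀ ≠ W₁. -/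

import Mathlib

open Set

namespace Separability

/-- `F` is an ultrafilter on the set `D` (members of `F` are subsets of `D`). -/
structure IsUltrafilterOnSet {σ : Type*} (D : Set σ) (F : Set (Set σ)) : Prop where
  sets_subset : ∀ X ∈ F, X ⊆ D
  univ_mem : D ∈ F
  empty_not_mem : ∅ ∉ F
  superset_mem : ∀ X ∈ F, ∀ Y, Y ⊆ D → X ⊆ Y → Y ∈ F
  inter_mem : ∀ X ∈ F, ∀ Y ∈ F, X ∩ Y ∈ F
  mem_or_compl_mem : ∀ X, X ⊆ D → (X ∈ F ∨ D \ X ∈ F)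

/-- An ultrafilter on (the type of ordinals below) `κ`. -/
def IsUltrafilterOn (κ : Ordinal) (F : Set (Set Ordinal)) : Prop :=
  IsUltrafilterOnSet (Set.Iio κ) F

/-- `F` is a *normal* ultrafilter on `κ`: it is an ultrafilter on `κ`, it contains every
co-bounded subset of `κ`, and every function that is regressive on some member of `F`
is constant on some member of `F`. -/
def IsNormalUltrafilterOn (κ : Ordinal) (F : Set (Set Ordinal)) : Prop :=
  IsUltrafilterOn κ F ∧
  (∀ α < κ, {β | α ≤ β ∧ β < κ} ∈ F) ∧
  (∀ f : Ordinal → Ordinal, ∀ S ∈ F, (∀ β ∈ S, 0 < β → f β < β) →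
    ∃ T ∈ F, ∃ γ, ∀ β ∈ T, f β = γ)

/-- The ordinal `κ` is a cardinal. -/
def IsCard (κ : Ordinal) : Prop := κ.card.ord = κ

/-- `F` (an ultrafilter on the set `D`) is `κ`-complete: it is closed under intersections
of families of fewer than `κ` sets. -/
def IsComplete {σ : Type*} (κ : Ordinal) (D : Set σ) (F : Set (Set σ)) : Prop :=
  ∀ δ < κ, ∀ g : Set.Iio δ → Set σ, (∀ i, g i ∈ F) → (D ∩ ⋂ i, g i) ∈ F

/-- `F` is nonprincipal: it contains no singleton. -/
def IsNonprincipal {σ : Type*} (F : Set (Set σ)) : Prop := ∀ b : σ, {b} ∉ F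

/-- `α` is a measurable cardinal: an uncountable cardinal carrying a nonprincipal
`α`-complete ultrafilter on `α`. -/
def IsMeasurable (α : Ordinal) : Prop :=
  IsCard α ∧ Ordinal.omega0 < α ∧
    ∃ F, IsUltrafilterOn α F ∧ IsNonprincipal F ∧ IsComplete α (Set.Iio α) F

/-- `P_κ(λ)`: the subsets of `λ` of cardinality less than `κ`. -/
def sP (κ lam : Ordinal.{0}) : Set (Set Ordinal.{0}) :=
  {x | x ⊆ Set.Iio lam ∧ Cardinal.mk x < Cardinal.lift.{1} κ.card}

/-- `F`, an ultrafilter on `P_κ(λ)`, is *fine*: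
for every `i < λ` the set `{x ∈ P_κ(λ) : i ∈ x}` belongs to `F`. -/
def IsFine (κ lam : Ordinal) (F : Set (Set (Set Ordinal))) : Prop :=
  ∀ i < lam, {x | x ∈ sP κ lam ∧ i ∈ x} ∈ F

/-- `κ` is a compact (strongly compact) cardinal: an uncountable cardinal such that for every
cardinal `λ ≥ κ` there is a `κ`-complete fine ultrafilter on `P_κ(λ)`. -/
def IsCompact (κ : Ordinal) : Prop :=
  IsCard κ ∧ Ordinal.omega0 < κ ∧
    ∀ lam, IsCard lam → κ ≤ lam →
      ∃ F, IsUltrafilterOnSet (sP κ lam) F ∧ IsComplete κ (sP κ lam) F ∧ IsFine κ lam F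

/-- `F`, an ultrafilter on `P_κ(λ)`, is *normal*: every choice function on a member of `F`
(`f x ∈ x` for all `x` in some member of `F`) is constant on some member of `F`. -/
def IsNormalFineMeasure (F : Set (Set (Set Ordinal))) : Prop :=
  ∀ f : Set Ordinal → Ordinal, ∀ S ∈ F, (∀ x ∈ S, f x ∈ x) →
    ∃ T ∈ F, ∃ γ, ∀ x ∈ T, f x = γ

/-- `κ` is a supercompact cardinal: for every cardinal `λ ≥ κ` there is a `κ`-complete
fine normal ultrafilter on `P_κ(λ)`. -/
def IsSupercompact (κ : Ordinal) : Prop :=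
  IsCard κ ∧
    ∀ lam, IsCard lam → κ ≤ lam →
      ∃ F, IsUltrafilterOnSet (sP κ lam) F ∧ IsComplete κ (sP κ lam) F ∧ IsFine κ lam F ∧
        IsNormalFineMeasure F

/-- The set of measurable cardinals below `κ`. -/
def measSet (κ : Ordinal) : Set Ordinal := {α | α < κ ∧ IsMeasurable α}

/-- `S_X = {α < κ : α is measurable and X ∩ α ∈ U_α}`. -/
def sX (κ : Ordinal) (U : Ordinal → Set (Set Ordinal)) (X : Set Ordinal) : Set Ordinal :=
  {α | α < κ ∧ IsMeasurable α ∧ X ∩ Set.Iio α ∈ U α}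

/-- The sum of `⟨U_α : α measurable below κ⟩` over `V`: `Y` belongs to the sum iff
`S_Y ∈ V`. -/
def sumUF (κ : Ordinal) (U : Ordinal → Set (Set Ordinal)) (V : Set (Set Ordinal)) :
    Set (Set Ordinal) :=
  {Y | Y ⊆ Set.Iio κ ∧ sX κ U Y ∈ V}

/-!
Each `U_α` is an ultrafilter, so `Y ↦ S_Y` commutes with intersections and turns complements
in `κ` into complements in `M`; hence `W = {Y : S_Y ∈ V}` is an ultrafilter once `M ∈ V`.
For normality, a function `f` regressive on `Y ∈ W` is constant, with some value `g α < α`, on a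
`U_α`-large part of `Y ∩ α` for each `α ∈ S_Y`; then `g` is regressive on `S_Y ∈ V`, hence
constant on a `V`-large set, and `f` takes that constant value on a `W`-large set.
Since `M ∩ α ∉ U_α` for all `α`, the set `S_M` is empty, so `M ∉ W`.
-/

theorem IsCard.isSuccLimit {κ : Ordinal} (hκ : IsCard κ) (hω : Ordinal.omega0 < κ) :
    Order.IsSuccLimit κ :=
  hκ ▸ Cardinal.isSuccLimit_ord (by simpa using Ordinal.card_le_card hω.le)

namespace IsUltrafilterOnSet

variable {σ : Type*} {D : Set σ} {F : Set (Set σ)}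

theorem nonempty_of_mem (hF : IsUltrafilterOnSet D F) {X : Set σ} (hX : X ∈ F) : X.Nonempty :=
  nonempty_iff_ne_empty.2 fun h => hF.empty_not_mem (h ▸ hX)

theorem diff_mem_iff (hF : IsUltrafilterOnSet D F) {X : Set σ} (hX : X ⊆ D) :
    D \ X ∈ F ↔ X ∉ F := by
  refine ⟨fun hc hx => ?_, fun h => (hF.mem_or_compl_mem X hX).resolve_left h⟩
  have := hF.inter_mem _ hx _ hc
  rw [inter_sdiff_self] at this
  exact hF.empty_not_mem this

end IsUltrafilterOnSet

theorem IsNormalUltrafilterOn.exists_lt_fiber_mem {α : Ordinal} {F : Set (Set Ordinal)}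
    (hF : IsNormalUltrafilterOn α F) (hα : 1 < α) {f : Ordinal → Ordinal} {S : Set Ordinal}
    (hS : S ∈ F) (hf : ∀ β ∈ S, 0 < β → f β < β) : ∃ γ < α, {β ∈ S | f β = γ} ∈ F := by
  obtain ⟨hUF, hcobdd, hnormal⟩ := hF
  have hS' : S ∩ {β | 1 ≤ β ∧ β < α} ∈ F := hUF.inter_mem _ hS _ (hcobdd 1 hα)
  obtain ⟨T, hT, γ, hTγ⟩ := hnormal f _ hS' fun β hβ => hf β hβ.1
  have hT' := hUF.inter_mem _ hT _ hS'
  obtain ⟨β, hβT, hβS, hβ1, hβα⟩ := hUF.nonempty_of_mem hT'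
  refine ⟨γ, ?_, hUF.superset_mem _ hT' _ ?_ ?_⟩
  · calc γ = f β := (hTγ β hβT).symm
      _ < β := hf β hβS (zero_lt_one.trans_le hβ1)
      _ < α := hβα
  · exact fun β hβ => hUF.sets_subset S hS hβ.1
  · exact fun β hβ => ⟨hβ.2.1, hTγ β hβ.1⟩

section SumUltrafilter

variable {κ : Ordinal} {U : Ordinal → Set (Set Ordinal)}

theorem measSet_subset_Iio : measSet κ ⊆ Iio κ :=
  fun _ hα => hα.1

theorem sX_subset_measSet (Y : Set Ordinal) : sX κ U Y ⊆ measSet κ :=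
  fun _ hα => ⟨hα.1, hα.2.1⟩

theorem sX_subset_Iio (Y : Set Ordinal) : sX κ U Y ⊆ Iio κ :=
  fun _ hα => hα.1

theorem sX_mono (hU : ∀ α < κ, IsMeasurable α → IsUltrafilterOn α (U α)) {Y Z : Set Ordinal}
    (h : Y ⊆ Z) : sX κ U Y ⊆ sX κ U Z :=
  fun α ⟨hακ, hαm, hY⟩ => ⟨hακ, hαm,
    (hU α hακ hαm).superset_mem _ hY _ inter_subset_right (inter_subset_inter_left _ h)⟩

theorem sX_empty (hU : ∀ α < κ, IsMeasurable α → IsUltrafilterOn α (U α)) : sX κ U ∅ = ∅ :=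
  eq_empty_of_forall_notMem fun α ⟨hακ, hαm, h⟩ =>
    (hU α hακ hαm).empty_not_mem (by rwa [empty_inter] at h)

theorem sX_Iio (hU : ∀ α < κ, IsMeasurable α → IsUltrafilterOn α (U α)) :
    sX κ U (Iio κ) = measSet κ := by
  refine (sX_subset_measSet _).antisymm fun α ⟨hακ, hαm⟩ => ⟨hακ, hαm, ?_⟩
  rw [inter_eq_right.2 (Iio_subset_Iio hακ.le)]
  exact (hU α hακ hαm).univ_mem

theorem sX_inter (hU : ∀ α < κ, IsMeasurable α → IsUltrafilterOn α (U α)) (Y Z : Set Ordinal) :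
    sX κ U (Y ∩ Z) = sX κ U Y ∩ sX κ U Z := by
  refine subset_antisymm (subset_inter (sX_mono hU inter_subset_left)
    (sX_mono hU inter_subset_right)) ?_
  rintro α ⟨⟨hακ, hαm, hY⟩, -, -, hZ⟩
  refine ⟨hακ, hαm, ?_⟩
  rw [inter_inter_distrib_right]
  exact (hU α hακ hαm).inter_mem _ hY _ hZ

theorem sX_Iio_diff (hU : ∀ α < κ, IsMeasurable α → IsUltrafilterOn α (U α)) (Y : Set Ordinal) :
    sX κ U (Iio κ \ Y) = measSet κ \ sX κ U Y := by
  ext α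
  refine ⟨fun h => ⟨sX_subset_measSet _ h, fun hY => ?_⟩, fun ⟨⟨hακ, hαm⟩, hY⟩ => ?_⟩
  · have := (hU α h.1 h.2.1).inter_mem _ h.2.2 _ hY.2.2
    rw [← inter_inter_distrib_right, sdiff_inter_self, empty_inter] at this
    exact (hU α h.1 h.2.1).empty_not_mem this
  · have hdiff : (Iio κ \ Y) ∩ Iio α = Iio α \ (Y ∩ Iio α) := by
      ext β
      simp only [mem_inter_iff, mem_sdiff, mem_Iio]
      exact ⟨fun ⟨⟨_, hβY⟩, hβα⟩ => ⟨hβα, fun h => hβY h.1⟩,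
        fun ⟨hβα, hβY⟩ => ⟨⟨hβα.trans hακ, fun h => hβY ⟨h, hβα⟩⟩, hβα⟩⟩
    refine ⟨hακ, hαm, ?_⟩
    rw [hdiff, (hU α hακ hαm).diff_mem_iff inter_subset_right]
    exact fun h => hY ⟨hακ, hαm, h⟩

theorem sX_measSet (hU : ∀ α < κ, IsMeasurable α → {β | β < α ∧ IsMeasurable β} ∉ U α) :
    sX κ U (measSet κ) = ∅ :=
  eq_empty_of_forall_notMem fun α ⟨hακ, hαm, h⟩ => hU α hακ hαm <| by
    convert h using 1
    ext β
    exact ⟨fun ⟨hβα, hβm⟩ => ⟨⟨hβα.trans hακ, hβm⟩, hβα⟩, fun ⟨⟨_, hβm⟩, hβα⟩ => ⟨hβα, hβm⟩⟩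

theorem Ioi_inter_measSet_subset_sX
    (hU : ∀ α < κ, IsMeasurable α → IsNormalUltrafilterOn α (U α)) (α : Ordinal) :
    Ioi α ∩ measSet κ ⊆ sX κ U {β | α ≤ β ∧ β < κ} := by
  rintro γ ⟨hαγ, hγκ, hγm⟩
  obtain ⟨hUγ, hcobdd, -⟩ := hU γ hγκ hγm
  exact ⟨hγκ, hγm, hUγ.superset_mem _ (hcobdd α hαγ) _ inter_subset_right
    fun β ⟨hαβ, hβγ⟩ => ⟨⟨hαβ, hβγ.trans hγκ⟩, hβγ⟩⟩

variable {V : Set (Set Ordinal)}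

theorem isUltrafilterOn_sumUF (hU : ∀ α < κ, IsMeasurable α → IsUltrafilterOn α (U α))
    (hV : IsUltrafilterOn κ V) (hM : measSet κ ∈ V) : IsUltrafilterOn κ (sumUF κ U V) where
  sets_subset _ hY := hY.1
  univ_mem := ⟨subset_rfl, (sX_Iio hU).symm ▸ hM⟩
  empty_not_mem h := hV.empty_not_mem (sX_empty hU ▸ h.2)
  superset_mem _ hY Z hZ hYZ := ⟨hZ, hV.superset_mem _ hY.2 _ (sX_subset_Iio Z) (sX_mono hU hYZ)⟩
  inter_mem _ hY _ hZ :=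
    ⟨inter_subset_left.trans hY.1, (sX_inter hU _ _).symm ▸ hV.inter_mem _ hY.2 _ hZ.2⟩
  mem_or_compl_mem Y hY := by
    refine (hV.mem_or_compl_mem _ (sX_subset_Iio Y)).imp (⟨hY, ·⟩) fun h => ⟨sdiff_subset, ?_⟩
    rw [sX_Iio_diff hU]
    exact hV.superset_mem _ (hV.inter_mem _ hM _ h) _ (sdiff_subset.trans measSet_subset_Iio)
      fun _ hα => ⟨hα.1, hα.2.2⟩

theorem exists_const_on_mem_sumUF
    (hU : ∀ α < κ, IsMeasurable α → IsNormalUltrafilterOn α (U α))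
    (hV : IsNormalUltrafilterOn κ V) {f : Ordinal → Ordinal} {S : Set Ordinal}
    (hS : S ∈ sumUF κ U V) (hf : ∀ β ∈ S, 0 < β → f β < β) :
    ∃ T ∈ sumUF κ U V, ∃ γ, ∀ β ∈ T, f β = γ := by
  obtain ⟨hVuf, -, hVnormal⟩ := hV
  have hfiber : ∀ α ∈ sX κ U S, ∃ γ < α, {β ∈ S ∩ Iio α | f β = γ} ∈ U α :=
    fun α ⟨hακ, hαm, hSα⟩ => (hU α hακ hαm).exists_lt_fiber_mem
      (Ordinal.one_lt_omega0.trans hαm.2.1) hSα fun β hβ => hf β hβ.1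
  choose! g hg_lt hg_mem using hfiber
  obtain ⟨T, hT, γ, hTγ⟩ := hVnormal g _ hS.2 fun α hα _ => hg_lt α hα
  refine ⟨{β ∈ S | f β = γ}, ⟨fun β hβ => hS.1 hβ.1, ?_⟩, γ, fun β hβ => hβ.2⟩
  refine hVuf.superset_mem _ (hVuf.inter_mem _ hT _ hS.2) _ (sX_subset_Iio _) ?_
  rintro α ⟨hαT, hακ, hαm, hSα⟩
  refine ⟨hακ, hαm, (hU α hακ hαm).1.superset_mem _ (hg_mem α ⟨hακ, hαm, hSα⟩) _
    inter_subset_right ?_⟩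
  exact fun β ⟨⟨hβS, hβα⟩, hβ⟩ => ⟨⟨hβS, hβ.trans (hTγ α hαT)⟩, hβα⟩

theorem isNormalUltrafilterOn_sumUF (hκ : Order.IsSuccLimit κ)
    (hU : ∀ α < κ, IsMeasurable α → IsNormalUltrafilterOn α (U α))
    (hV : IsNormalUltrafilterOn κ V) (hM : measSet κ ∈ V) :
    IsNormalUltrafilterOn κ (sumUF κ U V) := by
  have hUuf : ∀ α < κ, IsMeasurable α → IsUltrafilterOn α (U α) := fun α hα hm => (hU α hα hm).1
  refine ⟨isUltrafilterOn_sumUF hUuf hV.1 hM, fun α hα => ⟨fun β hβ => hβ.2, ?_⟩,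
    fun f S => exists_const_on_mem_sumUF hU hV⟩
  have hsucc := hV.1.inter_mem _ (hV.2.1 _ (hκ.succ_lt hα)) _ hM
  refine hV.1.superset_mem _ hsucc _ (sX_subset_Iio _)
    ((inter_subset_inter_left _ ?_).trans (Ioi_inter_measSet_subset_sX hU α))
  exact fun β hβ => Order.succ_le_iff.1 hβ.1

theorem measSet_notMem_sumUF
    (hU : ∀ α < κ, IsMeasurable α → {β | β < α ∧ IsMeasurable β} ∉ U α)
    (hV : IsUltrafilterOn κ V) : measSet κ ∉ sumUF κ U V :=
  fun h => hV.empty_not_mem (sX_measSet hU ▸ h.2)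

end SumUltrafilter

/-- If `S_X` belongs to `V₀` but not to `V₁`, then the sums `W₀, W₁` of `⟨U_α⟩` over
`V₀, V₁` are normal ultrafilters on `κ` which do not contain the measurables,
`X ∈ W₀`, `X ∉ W₁`, and in particular `W₀ ≠ W₁`. -/
theorem sums_give_distinct_ultrafilters (κ : Ordinal) (hcard : IsCard κ)
    (hunc : Ordinal.omega0 < κ)
    (U : Ordinal → Set (Set Ordinal))
    (hU : ∀ α, α < κ → IsMeasurable α →
      IsNormalUltrafilterOn α (U α) ∧ {β | β < α ∧ IsMeasurable β} ∉ U α)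
    (V₀ V₁ : Set (Set Ordinal))
    (hV₀ : IsNormalUltrafilterOn κ V₀) (hV₁ : IsNormalUltrafilterOn κ V₁)
    (hM₀ : measSet κ ∈ V₀) (hM₁ : measSet κ ∈ V₁)
    (X : Set Ordinal) (hXsub : X ⊆ Set.Iio κ)
    (hX₀ : sX κ U X ∈ V₀) (hX₁ : sX κ U X ∉ V₁) :
    IsNormalUltrafilterOn κ (sumUF κ U V₀) ∧ IsNormalUltrafilterOn κ (sumUF κ U V₁) ∧
      measSet κ ∉ sumUF κ U V₀ ∧ measSet κ ∉ sumUF κ U V₁ ∧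
      X ∈ sumUF κ U V₀ ∧ X ∉ sumUF κ U V₁ ∧ sumUF κ U V₀ ≠ sumUF κ U V₁ := by
  have hκ := hcard.isSuccLimit hunc
  have hUnormal := fun α hα hm => (hU α hα hm).1
  have hUsmall := fun α hα hm => (hU α hα hm).2
  have hX₀' : X ∈ sumUF κ U V₀ := ⟨hXsub, hX₀⟩
  have hX₁' : X ∉ sumUF κ U V₁ := fun h => hX₁ h.2
  exact ⟨isNormalUltrafilterOn_sumUF hκ hUnormal hV₀ hM₀,
    isNormalUltrafilterOn_sumUF hκ hUnormal hV₁ hM₁, measSet_notMem_sumUF hUsmall hV₀.1,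
    measSet_notMem_sumUF hUsmall hV₁.1, hX₀', hX₁', fun h => hX₁' (h ▸ hX₀')⟩

end Separability
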